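/- arXiv:2107.06312 — 2 statements merged into one kernel-verified Lean document; each statement's English description precedes it below -/
import Mathlib

section
/- Let Γ = (A, Θ, p, c) be an anonymous nonatomic game with incomplete information such that for every θ ∈ Θ there is a potential Φ_θ for the state-θ costs that is strictly convex on 𝓕. Then for every information structure (γ, T, π) the Bayes Wardrop equilibrium aggregate flows are unique: if y(·) and z(·) are two Bayes Wardrop equilibria, then y(τ) = z(τ) for every type profile τ ∈ T with π(τ|θ) > 0 for some θ ∈ Θ; in particular any two Bayes Wardrop equilibria induce the same outcome. -/
/-!
A Bayes Wardrop equilibrium `σ` satisfies the variational inequality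
`𝔼[⟨ρ(τ) - σ(τ), c(σ(τ), θ)⟩] ≥ 0` against every profile `ρ` with the same population masses:
grouped by player and type, the left side is a sum of interim-cost comparisons, each nonnegative
because `σ` only uses interim-cost minimizing actions. Adding the inequalities of two equilibria
with aggregate flows `y` and `z` gives `𝔼[⟨z - y, c(z) - c(y)⟩] ≤ 0`. The gradient `c(·, θ)` of a
strictly convex potential is strictly monotone, so every term of positive probability forces
`y(τ) = z(τ)`.
-/

open MeasureTheory

/-- The set of flows: the simplex over the finite action set `A`. -/
def FlowSet (A : Type*) [Fintype A] : Set (A → ℝ) :=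
  {y | (∀ a, 0 ≤ y a) ∧ ∑ a, y a = 1}

section FirstOrder

variable {E : Type*} [NormedAddCommGroup E] [NormedSpace ℝ E] {s : Set E} {f : E → ℝ} {x y : E}

theorem ConvexOn.add_fderiv_apply_sub_le (hf : ConvexOn ℝ s f) (hx : x ∈ s) (hy : y ∈ s)
    (hfx : DifferentiableAt ℝ f x) : f x + fderiv ℝ f x (y - x) ≤ f y := by
  set ℓ : ℝ →ᵃ[ℝ] E := AffineMap.lineMap x y
  have hderiv : HasDerivAt (f ∘ ℓ) (fderiv ℝ f x (y - x)) 0 := by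
    have hfℓ : HasFDerivAt f (fderiv ℝ f x) (ℓ 0) := by simpa [ℓ] using hfx.hasFDerivAt
    exact hfℓ.comp_hasDerivAt 0 AffineMap.hasDerivAt_lineMap
  have hslope := (hf.comp_affineMap ℓ).le_slope_of_hasDerivAt (by simpa [ℓ] using hx)
    (by simpa [ℓ] using hy) one_pos hderiv
  simp only [slope_def_field, Function.comp_apply, ℓ, AffineMap.lineMap_apply_zero,
    AffineMap.lineMap_apply_one, sub_zero, div_one] at hslope
  linarith

theorem StrictConvexOn.add_fderiv_apply_sub_lt (hf : StrictConvexOn ℝ s f) (hx : x ∈ s)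
    (hy : y ∈ s) (hxy : x ≠ y) (hfx : DifferentiableAt ℝ f x) :
    f x + fderiv ℝ f x (y - x) < f y := by
  set m : E := (1 / 2 : ℝ) • x + (1 / 2 : ℝ) • y
  have hm : m ∈ s := hf.1 hx hy (by norm_num) (by norm_num) (by norm_num)
  have hmid : f m < (1 / 2 : ℝ) • f x + (1 / 2 : ℝ) • f y :=
    hf.2 hx hy hxy (by norm_num) (by norm_num) (by norm_num)
  have hxm := hf.convexOn.add_fderiv_apply_sub_le hx hm hfx
  have hmx : m - x = (1 / 2 : ℝ) • (y - x) := by module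
  rw [hmx, map_smul, smul_eq_mul] at hxm
  simp only [smul_eq_mul] at hmid
  linarith

theorem StrictConvexOn.fderiv_apply_sub_lt (hf : StrictConvexOn ℝ s f) (hx : x ∈ s)
    (hy : y ∈ s) (hxy : x ≠ y) (hfx : DifferentiableAt ℝ f x) (hfy : DifferentiableAt ℝ f y) :
    fderiv ℝ f x (y - x) < fderiv ℝ f y (y - x) := by
  have hxy' := hf.add_fderiv_apply_sub_lt hx hy hxy hfx
  have hyx := hf.convexOn.add_fderiv_apply_sub_le hy hx hfy
  rw [← neg_sub, map_neg] at hyx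
  linarith

end FirstOrder

theorem ContinuousLinearMap.apply_eq_sum_mul_apply_single {A : Type*} [Fintype A] [DecidableEq A]
    (L : (A → ℝ) →L[ℝ] ℝ) (v : A → ℝ) : L v = ∑ a, v a * L (Pi.single a 1) := by
  conv_lhs => rw [pi_eq_sum_univ' v]
  simp [map_sum]

theorem Finset.sum_mul_le_sum_mul_of_pos_imp_le {A : Type*} [Fintype A] {w v C : A → ℝ}
    (hw : ∀ a, 0 ≤ w a) (hv : ∀ a, 0 ≤ v a) (hwv : ∑ a, w a = ∑ a, v a)
    (hC : ∀ a b, 0 < w a → C a ≤ C b) :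
    ∑ a, w a * C a ≤ ∑ a, v a * C a := by
  cases isEmpty_or_nonempty A
  · simp
  obtain ⟨a₀, -, ha₀⟩ := Finset.exists_min_image Finset.univ C Finset.univ_nonempty
  have hwC : ∀ a, w a * C a = w a * C a₀ := fun a => by
    rcases (hw a).lt_or_eq with hpos | hzero
    · rw [le_antisymm (hC a a₀ hpos) (ha₀ a (Finset.mem_univ a))]
    · rw [← hzero, zero_mul, zero_mul]
  calc ∑ a, w a * C a = ∑ a, v a * C a₀ := by
        simp only [hwC, ← Finset.sum_mul, hwv]
    _ ≤ ∑ a, v a * C a :=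
        Finset.sum_le_sum fun a _ => mul_le_mul_of_nonneg_left (ha₀ a (Finset.mem_univ a)) (hv a)

section BayesWardrop

variable {A Θ K : Type*} [Fintype A] [Fintype Θ] [Fintype K] {T : K → Type*}

def aggregateFlow (σ : ∀ k, T k → A → ℝ) (τ : ∀ k, T k) : A → ℝ :=
  fun a => ∑ l, σ l (τ l) a

theorem aggregateFlow_mem_flowSet {γ : K → ℝ} {σ : ∀ k, T k → A → ℝ}
    (hσ0 : ∀ k t a, 0 ≤ σ k t a) (hσ1 : ∀ k t, ∑ a, σ k t a = γ k) (hγ1 : ∑ k, γ k = 1)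
    (τ : ∀ k, T k) : aggregateFlow σ τ ∈ FlowSet A := by
  refine ⟨fun a => Finset.sum_nonneg fun l _ => hσ0 l (τ l) a, ?_⟩
  simp only [aggregateFlow]
  rw [Finset.sum_comm]
  simp only [hσ1, hγ1]

variable [DecidableEq K] [∀ k, Fintype (T k)] [∀ k, DecidableEq (T k)]

theorem Finset.sum_pi_sum_eq_sum_sum_filter {M : Type*} [AddCommMonoid M]
    (F : ∀ k, (∀ k, T k) → T k → M) :
    ∑ τ : ∀ k, T k, ∑ k, F k τ (τ k) =
      ∑ k, ∑ t : T k, ∑ τ ∈ Finset.univ.filter (fun τ : ∀ k, T k => τ k = t), F k τ t := by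
  rw [Finset.sum_comm]
  refine Finset.sum_congr rfl fun k _ => ?_
  rw [← Finset.sum_fiberwise Finset.univ (fun τ : ∀ k, T k => τ k)]
  refine Finset.sum_congr rfl fun t _ => Finset.sum_congr rfl fun τ hτ => ?_
  rw [(Finset.mem_filter.mp hτ).2]

def interimCost (p : Θ → ℝ) (π : Θ → (∀ k, T k) → ℝ) (c : A → (A → ℝ) → Θ → ℝ)
    (σ : ∀ k, T k → A → ℝ) (k : K) (t : T k) (a : A) : ℝ :=
  ∑ θ, ∑ τ ∈ Finset.univ.filter (fun τ : ∀ k, T k => τ k = t),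
    p θ * π θ τ * c a (aggregateFlow σ τ) θ

def IsBayesWardrop (p : Θ → ℝ) (π : Θ → (∀ k, T k) → ℝ) (c : A → (A → ℝ) → Θ → ℝ)
    (σ : ∀ k, T k → A → ℝ) : Prop :=
  ∀ k t a b, 0 < σ k t a → interimCost p π c σ k t a ≤ interimCost p π c σ k t b

theorem sum_expectedCost_eq_sum_interimCost (p : Θ → ℝ) (π : Θ → (∀ k, T k) → ℝ)
    (c : A → (A → ℝ) → Θ → ℝ) (σ : ∀ k, T k → A → ℝ) (d : ∀ k, T k → A → ℝ) :
    ∑ θ, ∑ τ, p θ * π θ τ * ∑ a, (∑ l, d l (τ l) a) * c a (aggregateFlow σ τ) θ =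
      ∑ k, ∑ t : T k, ∑ a, d k t a * interimCost p π c σ k t a := by
  set G : Θ → (∀ k, T k) → A → ℝ := fun θ τ a => p θ * π θ τ * c a (aggregateFlow σ τ) θ
  calc ∑ θ, ∑ τ, p θ * π θ τ * ∑ a, (∑ l, d l (τ l) a) * c a (aggregateFlow σ τ) θ
      = ∑ θ, ∑ τ : ∀ k, T k, ∑ k, ∑ a, d k (τ k) a * G θ τ a := by
        simp only [G, Finset.mul_sum, Finset.sum_mul]
        refine Finset.sum_congr rfl fun θ _ => Finset.sum_congr rfl fun τ _ => ?_
        rw [Finset.sum_comm]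
        exact Finset.sum_congr rfl fun k _ => Finset.sum_congr rfl fun a _ => by ring
    _ = ∑ θ, ∑ k, ∑ t : T k, ∑ τ ∈ Finset.univ.filter (fun τ : ∀ k, T k => τ k = t),
          ∑ a, d k t a * G θ τ a :=
        Finset.sum_congr rfl fun θ _ =>
          Finset.sum_pi_sum_eq_sum_sum_filter fun k τ t => ∑ a, d k t a * G θ τ a
    _ = ∑ k, ∑ t : T k, ∑ a, d k t a * interimCost p π c σ k t a := by
        simp only [interimCost, Finset.mul_sum]
        rw [Finset.sum_comm]
        refine Finset.sum_congr rfl fun k _ => ?_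
        rw [Finset.sum_comm]
        refine Finset.sum_congr rfl fun t _ => ?_
        conv_rhs => rw [Finset.sum_comm]
        exact Finset.sum_congr rfl fun θ _ => Finset.sum_comm

variable {p : Θ → ℝ} {π : Θ → (∀ k, T k) → ℝ} {c : A → (A → ℝ) → Θ → ℝ}
  {σ ρ : ∀ k, T k → A → ℝ}

theorem IsBayesWardrop.variational_inequality (hσ : IsBayesWardrop p π c σ)
    (hσ0 : ∀ k t a, 0 ≤ σ k t a) (hρ0 : ∀ k t a, 0 ≤ ρ k t a)
    (hmass : ∀ k t, ∑ a, σ k t a = ∑ a, ρ k t a) :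
    0 ≤ ∑ θ, ∑ τ, p θ * π θ τ *
      ∑ a, (aggregateFlow ρ τ a - aggregateFlow σ τ a) * c a (aggregateFlow σ τ) θ := by
  have hgap : ∀ τ a, aggregateFlow ρ τ a - aggregateFlow σ τ a =
      ∑ l, (ρ l (τ l) a - σ l (τ l) a) := fun τ a => (Finset.sum_sub_distrib ..).symm
  simp only [hgap]
  rw [sum_expectedCost_eq_sum_interimCost p π c σ fun k t a => ρ k t a - σ k t a]
  refine Finset.sum_nonneg fun k _ => Finset.sum_nonneg fun t _ => ?_
  simp only [sub_mul, Finset.sum_sub_distrib, sub_nonneg]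
  exact Finset.sum_mul_le_sum_mul_of_pos_imp_le (hσ0 k t) (hρ0 k t) (hmass k t) (hσ k t)

theorem IsBayesWardrop.aggregateFlow_eq {s : Set (A → ℝ)} (hp : ∀ θ, 0 < p θ)
    (hπ0 : ∀ θ τ, 0 ≤ π θ τ)
    (hmono : ∀ θ, ∀ y ∈ s, ∀ z ∈ s, y ≠ z → 0 < ∑ a, (z a - y a) * (c a z θ - c a y θ))
    (hσ : IsBayesWardrop p π c σ) (hρ : IsBayesWardrop p π c ρ)
    (hσ0 : ∀ k t a, 0 ≤ σ k t a) (hρ0 : ∀ k t a, 0 ≤ ρ k t a)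
    (hmass : ∀ k t, ∑ a, σ k t a = ∑ a, ρ k t a)
    (hσs : ∀ τ, aggregateFlow σ τ ∈ s) (hρs : ∀ τ, aggregateFlow ρ τ ∈ s)
    {θ : Θ} {τ : ∀ k, T k} (hθτ : 0 < π θ τ) :
    aggregateFlow σ τ = aggregateFlow ρ τ := by
  set Y := aggregateFlow σ
  set Z := aggregateFlow ρ
  set M : Θ → (∀ k, T k) → ℝ :=
    fun θ τ => p θ * π θ τ * ∑ a, (Z τ a - Y τ a) * (c a (Z τ) θ - c a (Y τ) θ)
  have hM0 : ∀ θ τ, 0 ≤ M θ τ := fun θ τ => by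
    refine mul_nonneg (mul_nonneg (hp θ).le (hπ0 θ τ)) ?_
    by_cases hYZ : Y τ = Z τ
    · simp [hYZ]
    · exact (hmono θ _ (hσs τ) _ (hρs τ) hYZ).le
  have hsum : ∑ θ, ∑ τ, M θ τ ≤ 0 := by
    have hσρ := hσ.variational_inequality hσ0 hρ0 hmass
    have hρσ := hρ.variational_inequality hρ0 hσ0 fun k t => (hmass k t).symm
    have hsplit : ∑ θ, ∑ τ, M θ τ =
        -((∑ θ, ∑ τ, p θ * π θ τ * ∑ a, (Z τ a - Y τ a) * c a (Y τ) θ) +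
          ∑ θ, ∑ τ, p θ * π θ τ * ∑ a, (Y τ a - Z τ a) * c a (Z τ) θ) := by
      simp only [M, ← Finset.sum_add_distrib, ← Finset.sum_neg_distrib, ← mul_add, ← mul_neg]
      refine Finset.sum_congr rfl fun θ _ => Finset.sum_congr rfl fun τ _ => ?_
      congr 1
      exact Finset.sum_congr rfl fun a _ => by ring
    linarith
  have hrow : ∀ θ, 0 ≤ ∑ τ, M θ τ := fun θ => Finset.sum_nonneg fun τ _ => hM0 θ τ
  have hMθτ : M θ τ = 0 := by
    have hrow0 := (Fintype.sum_eq_zero_iff_of_nonneg hrow).mp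
      (le_antisymm hsum (Finset.sum_nonneg fun θ _ => hrow θ))
    exact congrFun ((Fintype.sum_eq_zero_iff_of_nonneg (hM0 θ)).mp (congrFun hrow0 θ)) τ
  by_contra hYZ
  exact hMθτ.not_gt (mul_pos (mul_pos (hp θ) hθτ) (hmono θ _ (hσs τ) _ (hρs τ) hYZ))

end BayesWardrop

theorem StrictConvexOn.sum_sub_mul_sub_pos {A : Type*} [Fintype A] [DecidableEq A]
    {s : Set (A → ℝ)} {Φ : (A → ℝ) → ℝ} {C : A → (A → ℝ) → ℝ} (hΦ : StrictConvexOn ℝ s Φ)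
    (hdiff : Differentiable ℝ Φ) (hpot : ∀ y ∈ s, ∀ a, fderiv ℝ Φ y (Pi.single a 1) = C a y)
    {y z : A → ℝ} (hy : y ∈ s) (hz : z ∈ s) (hyz : y ≠ z) :
    0 < ∑ a, (z a - y a) * (C a z - C a y) := by
  have hgrad : ∀ x ∈ s, ∀ v, fderiv ℝ Φ x v = ∑ a, v a * C a x := fun x hx v => by
    simp only [(fderiv ℝ Φ x).apply_eq_sum_mul_apply_single v, hpot x hx]
  have hlt := hΦ.fderiv_apply_sub_lt hy hz hyz (hdiff y) (hdiff z)
  rw [hgrad y hy, hgrad z hz] at hlt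
  simp only [mul_sub, Finset.sum_sub_distrib, sub_pos]
  simpa only [Pi.sub_apply] using hlt

theorem stmt11_general {A Θ K : Type*} [Fintype A] [DecidableEq A]
    [Fintype Θ] [Fintype K] [DecidableEq K]
    (p : Θ → ℝ) (hp : ∀ θ, 0 < p θ)
    (c : A → (A → ℝ) → Θ → ℝ)
    -- the state-wise strictly convex potential
    (Φ : Θ → (A → ℝ) → ℝ) (hdiff : ∀ θ, Differentiable ℝ (Φ θ))
    (hpot : ∀ θ, ∀ y ∈ FlowSet A, ∀ a : A, fderiv ℝ (Φ θ) y (Pi.single a 1) = c a y θ)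
    (hconv : ∀ θ, StrictConvexOn ℝ (FlowSet A) (Φ θ))
    -- the information structure
    (γ : K → ℝ) (hγ1 : ∑ k, γ k = 1)
    (T : K → Type*) [∀ k, Fintype (T k)] [∀ k, DecidableEq (T k)]
    (π : Θ → (∀ k, T k) → ℝ)
    (hπ0 : ∀ θ τ, 0 ≤ π θ τ)
    -- two strategy profiles
    (σ ρ : ∀ k, T k → A → ℝ)
    (hσ0 : ∀ k t a, 0 ≤ σ k t a) (hσ1 : ∀ k t, ∑ a, σ k t a = γ k)
    (hρ0 : ∀ k t a, 0 ≤ ρ k t a) (hρ1 : ∀ k t, ∑ a, ρ k t a = γ k)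
    -- both are Bayes Wardrop equilibria
    (hBWEσ : ∀ (k : K) (t : T k) (a b : A), 0 < σ k t a →
      (∑ θ, ∑ τ ∈ Finset.univ.filter (fun τ : ∀ k, T k => τ k = t),
        p θ * π θ τ * c a (fun b' => ∑ l, σ l (τ l) b') θ) ≤
      (∑ θ, ∑ τ ∈ Finset.univ.filter (fun τ : ∀ k, T k => τ k = t),
        p θ * π θ τ * c b (fun b' => ∑ l, σ l (τ l) b') θ))
    (hBWEρ : ∀ (k : K) (t : T k) (a b : A), 0 < ρ k t a →
      (∑ θ, ∑ τ ∈ Finset.univ.filter (fun τ : ∀ k, T k => τ k = t),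
        p θ * π θ τ * c a (fun b' => ∑ l, ρ l (τ l) b') θ) ≤
      (∑ θ, ∑ τ ∈ Finset.univ.filter (fun τ : ∀ k, T k => τ k = t),
        p θ * π θ τ * c b (fun b' => ∑ l, ρ l (τ l) b') θ)) :
    -- conclusion: equal aggregate flows on positive-probability type profiles ...
    (∀ τ : ∀ k, T k, (∃ θ, 0 < π θ τ) →
      ∀ a : A, ∑ l, σ l (τ l) a = ∑ l, ρ l (τ l) a) ∧
    -- ... and in particular the same induced outcome
    (∃ (hσF : ∀ τ : ∀ k, T k, (fun b => ∑ l, σ l (τ l) b) ∈ FlowSet A)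
       (hρF : ∀ τ : ∀ k, T k, (fun b => ∑ l, ρ l (τ l) b) ∈ FlowSet A),
      ∀ θ,
        (∑ τ, (ENNReal.ofReal (π θ τ)) •
          Measure.dirac (⟨fun b => ∑ l, σ l (τ l) b, hσF τ⟩ : ↥(FlowSet A))) =
        (∑ τ, (ENNReal.ofReal (π θ τ)) •
          Measure.dirac (⟨fun b => ∑ l, ρ l (τ l) b, hρF τ⟩ : ↥(FlowSet A)))) := by
  have hσF := aggregateFlow_mem_flowSet hσ0 hσ1 hγ1
  have hρF := aggregateFlow_mem_flowSet hρ0 hρ1 hγ1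
  have hflow : ∀ τ : ∀ k, T k, (∃ θ, 0 < π θ τ) → aggregateFlow σ τ = aggregateFlow ρ τ := by
    rintro τ ⟨θ, hθτ⟩
    exact IsBayesWardrop.aggregateFlow_eq hp hπ0
      (fun θ _ hy _ hz hyz => (hconv θ).sum_sub_mul_sub_pos (hdiff θ) (hpot θ) hy hz hyz)
      hBWEσ hBWEρ hσ0 hρ0 (fun k t => (hσ1 k t).trans (hρ1 k t).symm) hσF hρF hθτ
  refine ⟨fun τ hτ a => congrFun (hflow τ hτ) a, hσF, hρF,
    fun θ => Finset.sum_congr rfl fun τ _ => ?_⟩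
  rcases (hπ0 θ τ).eq_or_lt with hzero | hpos
  · simp [← hzero]
  · congr 3
    exact hflow τ ⟨θ, hpos⟩

/-- In an ANGII with a state-wise strictly convex potential, for every
information structure, Bayes Wardrop equilibrium aggregate flows are unique (on type
profiles of positive probability), hence any two BWE induce the same outcome. -/
theorem stmt11 {A Θ K : Type*} [Fintype A] [Nonempty A] [DecidableEq A]
    [Fintype Θ] [Nonempty Θ] [Fintype K] [Nonempty K] [DecidableEq K]
    (p : Θ → ℝ) (hp : ∀ θ, 0 < p θ) (hp1 : ∑ θ, p θ = 1)
    (c : A → (A → ℝ) → Θ → ℝ)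
    (hc : ∀ a θ, ContinuousOn (fun y => c a y θ) (FlowSet A))
    -- the state-wise strictly convex potential
    (Φ : Θ → (A → ℝ) → ℝ) (hdiff : ∀ θ, Differentiable ℝ (Φ θ))
    (hpot : ∀ θ, ∀ y ∈ FlowSet A, ∀ a : A, fderiv ℝ (Φ θ) y (Pi.single a 1) = c a y θ)
    (hconv : ∀ θ, StrictConvexOn ℝ (FlowSet A) (Φ θ))
    -- the information structure
    (γ : K → ℝ) (hγ0 : ∀ k, 0 ≤ γ k) (hγ1 : ∑ k, γ k = 1)
    (T : K → Type*) [∀ k, Fintype (T k)] [∀ k, Nonempty (T k)] [∀ k, DecidableEq (T k)]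
    (π : Θ → (∀ k, T k) → ℝ)
    (hπ0 : ∀ θ τ, 0 ≤ π θ τ) (hπ1 : ∀ θ, ∑ τ, π θ τ = 1)
    -- two strategy profiles
    (σ ρ : ∀ k, T k → A → ℝ)
    (hσ0 : ∀ k t a, 0 ≤ σ k t a) (hσ1 : ∀ k t, ∑ a, σ k t a = γ k)
    (hρ0 : ∀ k t a, 0 ≤ ρ k t a) (hρ1 : ∀ k t, ∑ a, ρ k t a = γ k)
    -- both are Bayes Wardrop equilibria
    (hBWEσ : ∀ (k : K) (t : T k) (a b : A), 0 < σ k t a →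
      (∑ θ, ∑ τ ∈ Finset.univ.filter (fun τ : ∀ k, T k => τ k = t),
        p θ * π θ τ * c a (fun b' => ∑ l, σ l (τ l) b') θ) ≤
      (∑ θ, ∑ τ ∈ Finset.univ.filter (fun τ : ∀ k, T k => τ k = t),
        p θ * π θ τ * c b (fun b' => ∑ l, σ l (τ l) b') θ))
    (hBWEρ : ∀ (k : K) (t : T k) (a b : A), 0 < ρ k t a →
      (∑ θ, ∑ τ ∈ Finset.univ.filter (fun τ : ∀ k, T k => τ k = t),
        p θ * π θ τ * c a (fun b' => ∑ l, ρ l (τ l) b') θ) ≤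
      (∑ θ, ∑ τ ∈ Finset.univ.filter (fun τ : ∀ k, T k => τ k = t),
        p θ * π θ τ * c b (fun b' => ∑ l, ρ l (τ l) b') θ)) :
    -- conclusion: equal aggregate flows on positive-probability type profiles ...
    (∀ τ : ∀ k, T k, (∃ θ, 0 < π θ τ) →
      ∀ a : A, ∑ l, σ l (τ l) a = ∑ l, ρ l (τ l) a) ∧
    -- ... and in particular the same induced outcome
    (∃ (hσF : ∀ τ : ∀ k, T k, (fun b => ∑ l, σ l (τ l) b) ∈ FlowSet A)
       (hρF : ∀ τ : ∀ k, T k, (fun b => ∑ l, ρ l (τ l) b) ∈ FlowSet A),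
      ∀ θ,
        (∑ τ, (ENNReal.ofReal (π θ τ)) •
          Measure.dirac (⟨fun b => ∑ l, σ l (τ l) b, hσF τ⟩ : ↥(FlowSet A))) =
        (∑ τ, (ENNReal.ofReal (π θ τ)) •
          Measure.dirac (⟨fun b => ∑ l, ρ l (τ l) b, hρF τ⟩ : ↥(FlowSet A)))) :=
  stmt11_general p hp c Φ hdiff hpot hconv γ hγ1 T π hπ0 σ ρ hσ0 hσ1 hρ0 hρ1 hBWEσ hBWEρ
end

section
/- Let Γ = (A, Θ, p, c) be an anonymous nonatomic game with incomplete information. For each n ≥ 1, let β^n be a Bayes correlated equilibrium of the n-player game Γ_n with induced outcome μ^n. If there is a strictly increasing sequence (n_j) and an outcome μ such that for every θ ∈ Θ, μ^{n_j}(·|θ) converges weak* to μ(·|θ), then μ is a Bayes correlated Wardrop equilibrium of Γ. -/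
open MeasureTheory Filter

/-- The flow induced by an action profile of `n` players. -/
noncomputable def flowOf {A : Type*} [Fintype A] [DecidableEq A] {n : ℕ}
    (v : Fin n → A) : A → ℝ :=
  fun a => (∑ i, if v i = a then (1 : ℝ) else 0) / n

lemma flowOf_mem {A : Type*} [Fintype A] [DecidableEq A] {n : ℕ} (hn : 0 < n)
    (v : Fin n → A) : flowOf v ∈ FlowSet A := by
  constructor
  · intro a
    apply div_nonneg _ (Nat.cast_nonneg n)
    exact Finset.sum_nonneg fun i _ => by split <;> norm_num
  · have h1 : ∑ a, flowOf v a = (∑ a, ∑ i, if v i = a then (1 : ℝ) else 0) / n := by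
      rw [Finset.sum_div]; rfl
    rw [h1, Finset.sum_comm]
    have h2 : ∀ i : Fin n, (∑ a, if v i = a then (1 : ℝ) else 0) = 1 := by
      intro i; simp
    rw [Finset.sum_congr rfl fun i _ => h2 i]
    simp
    simp [hn.ne']

/-!
Averaging the obedience constraints of `β` over the `n` players gives
`∑ θ, p θ * E[y a * c a y θ] ≤ ∑ θ, p θ * E[y a * c b (y + (e b - e a) / n) θ]` under `μⁿ`:
the players told to play `a` form the fraction `y a` of the population, and a deviation of one
of them to `b` moves the flow by `(e b - e a) / n`, with `e` the unit vectors. By uniform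
continuity of `c b` on the compact simplex this shift changes the cost by less than `ε` once `n`
is large, and both sides are then integrals of continuous functions of the flow, so the
inequality passes to the weak* limit.
-/

open Finset

section Flows

variable {A : Type*} [Fintype A]

lemma isCompact_flowSet : IsCompact (FlowSet A) := isCompact_stdSimplex ℝ A

lemma FlowSet.apply_le_one {y : A → ℝ} (hy : y ∈ FlowSet A) (a : A) : y a ≤ 1 :=
  hy.2 ▸ single_le_sum (fun x _ => hy.1 x) (mem_univ a)

variable [DecidableEq A]

lemma flowOf_eq_smul_sum_single {n : ℕ} (v : Fin n → A) :
    flowOf v = (n : ℝ)⁻¹ • ∑ i, Pi.single (v i) (1 : ℝ) := by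
  funext x
  simp [flowOf, Finset.sum_apply, Pi.single_apply, div_eq_inv_mul, eq_comm]

noncomputable def shiftFlow (a b : A) (n : ℕ) (y : A → ℝ) : A → ℝ :=
  y + (n : ℝ)⁻¹ • (Pi.single b 1 - Pi.single a 1)

lemma flowOf_update {n : ℕ} (v : Fin n → A) (i : Fin n) (b : A) :
    flowOf (Function.update v i b) = shiftFlow (v i) b n (flowOf v) := by
  have hsum : ∀ w : Fin n → A, ∑ j, (Pi.single (w j) 1 : A → ℝ) =
      Pi.single (w i) 1 + ∑ j ∈ univ.erase i, Pi.single (w j) 1 :=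
    fun w => (add_sum_erase _ _ (mem_univ i)).symm
  have herase : ∑ j ∈ univ.erase i, (Pi.single (Function.update v i b j) 1 : A → ℝ) =
      ∑ j ∈ univ.erase i, Pi.single (v j) 1 :=
    sum_congr rfl fun j hj => by rw [Function.update_of_ne (ne_of_mem_erase hj)]
  rw [shiftFlow, flowOf_eq_smul_sum_single, flowOf_eq_smul_sum_single, hsum, hsum v, herase,
    Function.update_self, ← smul_add]
  congr 1
  abel

lemma shiftFlow_flowOf_mem {n : ℕ} (hn : 0 < n) {v : Fin n → A} {a : A} (ha : flowOf v a ≠ 0)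
    (b : A) : shiftFlow a b n (flowOf v) ∈ FlowSet A := by
  obtain ⟨i, rfl⟩ : ∃ i, v i = a := by
    by_contra! h
    simp [flowOf, h] at ha
  exact flowOf_update v i b ▸ flowOf_mem hn _

lemma dist_shiftFlow_le (a b : A) (n : ℕ) (y : A → ℝ) :
    dist (shiftFlow a b n y) y ≤ (n : ℝ)⁻¹ := by
  rw [shiftFlow, dist_eq_norm, add_sub_cancel_left, norm_smul, Real.norm_eq_abs,
    abs_of_nonneg (by positivity)]
  refine mul_le_of_le_one_right (by positivity)
    ((pi_norm_le_iff_of_nonneg zero_le_one).2 fun x => ?_)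
  simp only [Pi.sub_apply, Pi.single_apply]
  split_ifs <;> norm_num

lemma eventually_dist_shiftFlow_lt {X : Type*} [PseudoMetricSpace X] {f : (A → ℝ) → X}
    (hf : ContinuousOn f (FlowSet A)) (a b : A) {ε : ℝ} (hε : 0 < ε) :
    ∀ᶠ n in atTop, ∀ y ∈ FlowSet A, shiftFlow a b n y ∈ FlowSet A →
      dist (f (shiftFlow a b n y)) (f y) < ε := by
  obtain ⟨δ, hδ, hf⟩ :=
    Metric.uniformContinuousOn_iff.1 (isCompact_flowSet.uniformContinuousOn_of_continuous hf) ε hε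
  filter_upwards [(tendsto_inv_atTop_zero.comp tendsto_natCast_atTop_atTop).eventually
    (gt_mem_nhds hδ)] with n hn y hy hshift
  exact hf _ hshift _ hy ((dist_shiftFlow_le a b n y).trans_lt hn)

lemma sum_sum_filter_eq_mul_sum_flowOf {n : ℕ} (hn : 0 < n) (a : A) (g : (Fin n → A) → ℝ) :
    ∑ i, ∑ v ∈ univ.filter (fun v : Fin n → A => v i = a), g v = n * ∑ v, flowOf v a * g v := by
  simp_rw [sum_filter, mul_sum]
  rw [sum_comm]
  refine sum_congr rfl fun v _ => ?_
  rw [flowOf, ← mul_assoc, mul_div_cancel₀ _ (by positivity), sum_mul]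
  simp

end Flows

lemma integral_sum_smul_dirac {X ι : Type*} [MeasurableSpace X] [MeasurableSingletonClass X]
    [Fintype ι] (x : ι → X) {w : ι → ℝ} (hw : ∀ i, 0 ≤ w i) (f : X → ℝ) :
    ∫ y, f y ∂(∑ i, ENNReal.ofReal (w i) • Measure.dirac (x i)) = ∑ i, w i * f (x i) := by
  rw [integral_finsetSum_measure fun i _ =>
    (integrable_dirac enorm_lt_top).smul_measure ENNReal.ofReal_ne_top]
  simp [integral_smul_measure, ENNReal.toReal_ofReal (hw _)]

section Game

variable {A Θ : Type*} [Fintype A] [DecidableEq A] [Fintype Θ] {n : ℕ}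

def IsObedient (p : Θ → ℝ) (c : A → (A → ℝ) → Θ → ℝ) (β : Θ → (Fin n → A) → ℝ) : Prop :=
  ∀ (i : Fin n) (a b : A),
    (∑ θ, ∑ v ∈ univ.filter (fun v : Fin n → A => v i = a), p θ * β θ v * c a (flowOf v) θ) ≤
      ∑ θ, ∑ v ∈ univ.filter (fun v : Fin n → A => v i = a),
        p θ * β θ v * c b (flowOf (Function.update v i b)) θ

/-- `∑ θ, p θ * ∫ y, y a * f y θ ∂μ(·|θ)` for the outcome `μ` of `β`. -/
noncomputable def expectedCost (p : Θ → ℝ) (β : Θ → (Fin n → A) → ℝ) (a : A)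
    (f : (A → ℝ) → Θ → ℝ) : ℝ :=
  ∑ θ, p θ * ∑ v, β θ v * (flowOf v a * f (flowOf v) θ)

lemma IsObedient.expectedCost_le {p : Θ → ℝ} {c : A → (A → ℝ) → Θ → ℝ}
    {β : Θ → (Fin n → A) → ℝ} (hn : 0 < n) (h : IsObedient p c β) (a b : A) :
    expectedCost p β a (c a) ≤ expectedCost p β a (fun y => c b (shiftFlow a b n y)) := by
  have hsum : ∀ f : (A → ℝ) → Θ → ℝ,
      ∑ i, ∑ θ, ∑ v ∈ univ.filter (fun v : Fin n → A => v i = a), p θ * β θ v * f (flowOf v) θ =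
        n * expectedCost p β a f := by
    intro f
    rw [sum_comm, expectedCost, mul_sum]
    refine sum_congr rfl fun θ _ => ?_
    rw [sum_sum_filter_eq_mul_sum_flowOf hn, mul_sum, mul_sum, mul_sum]
    exact sum_congr rfl fun v _ => by ring
  have hdev : ∀ i, ∑ θ, ∑ v ∈ univ.filter (fun v : Fin n → A => v i = a),
      p θ * β θ v * c b (flowOf (Function.update v i b)) θ =
      ∑ θ, ∑ v ∈ univ.filter (fun v : Fin n → A => v i = a),
        p θ * β θ v * c b (shiftFlow a b n (flowOf v)) θ := fun i =>
    sum_congr rfl fun θ _ => sum_congr rfl fun v hv => by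
      rw [flowOf_update, (mem_filter.1 hv).2]
  have := sum_le_sum (s := univ) fun i _ => (h i a b).trans_eq (hdev i)
  rw [hsum (c a), hsum fun y => c b (shiftFlow a b n y)] at this
  exact le_of_mul_le_mul_left this (by positivity)

lemma expectedCost_le_add {p : Θ → ℝ} {β : Θ → (Fin n → A) → ℝ} (hn : 0 < n)
    (hp : ∀ θ, 0 ≤ p θ) (hp1 : ∑ θ, p θ = 1) (hβ0 : ∀ θ v, 0 ≤ β θ v) (hβ1 : ∀ θ, ∑ v, β θ v = 1)
    {a : A} {ε : ℝ} (hε : 0 ≤ ε) {f g : (A → ℝ) → Θ → ℝ}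
    (hfg : ∀ θ (v : Fin n → A), flowOf v a ≠ 0 → f (flowOf v) θ ≤ g (flowOf v) θ + ε) :
    expectedCost p β a f ≤ expectedCost p β a g + ε := by
  have hle : ∀ θ (v : Fin n → A),
      flowOf v a * f (flowOf v) θ ≤ flowOf v a * g (flowOf v) θ + ε := by
    intro θ v
    by_cases h0 : flowOf v a = 0
    · simp [h0, hε]
    have hy := flowOf_mem hn v
    calc flowOf v a * f (flowOf v) θ ≤ flowOf v a * (g (flowOf v) θ + ε) :=
          mul_le_mul_of_nonneg_left (hfg θ v h0) (hy.1 a)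
      _ ≤ flowOf v a * g (flowOf v) θ + ε := by
          rw [mul_add]; gcongr; exact mul_le_of_le_one_left hε (FlowSet.apply_le_one hy a)
  calc expectedCost p β a f ≤ ∑ θ, p θ * ∑ v, β θ v * (flowOf v a * g (flowOf v) θ + ε) := by
        unfold expectedCost
        gcongr with θ _ v _
        exacts [hp θ, hβ0 θ v, hle θ v]
    _ = expectedCost p β a g + ε := by
        simp only [expectedCost, mul_add, sum_add_distrib, ← sum_mul, hβ1, one_mul, hp1]

end Game

theorem stmt13_general {A Θ : Type*} [Fintype A] [DecidableEq A]
    [Fintype Θ]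
    (p : Θ → ℝ) (hp : ∀ θ, 0 < p θ) (hp1 : ∑ θ, p θ = 1)
    (c : A → (A → ℝ) → Θ → ℝ)
    (hc : ∀ a θ, ContinuousOn (fun y => c a y θ) (FlowSet A))
    -- for each n ≥ 1, a Bayes correlated equilibrium β n of the n-player game Γ_n
    (β : ∀ n : ℕ, Θ → (Fin n → A) → ℝ)
    (hβ0 : ∀ n, 0 < n → ∀ θ v, 0 ≤ β n θ v)
    (hβ1 : ∀ n, 0 < n → ∀ θ, ∑ v, β n θ v = 1)
    (hBCE : ∀ n, 0 < n → ∀ (i : Fin n) (a b : A),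
      (∑ θ, ∑ v ∈ Finset.univ.filter (fun v : Fin n → A => v i = a),
        p θ * β n θ v * c a (flowOf v) θ) ≤
      (∑ θ, ∑ v ∈ Finset.univ.filter (fun v : Fin n → A => v i = a),
        p θ * β n θ v * c b (flowOf (Function.update v i b)) θ))
    -- the induced outcomes
    (μn : ℕ → Θ → Measure ↥(FlowSet A))
    (hout : ∀ n (hn : 0 < n) (θ : Θ), μn n θ =
      ∑ v : Fin n → A, (ENNReal.ofReal (β n θ v)) •
        Measure.dirac (⟨flowOf v, flowOf_mem hn v⟩ : ↥(FlowSet A)))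
    -- a weak* accumulation point μ along a strictly increasing subsequence
    (nj : ℕ → ℕ) (hnj : StrictMono nj) (hnj1 : ∀ j, 0 < nj j)
    (μ : Θ → Measure ↥(FlowSet A))
    (hconv : ∀ (θ : Θ) (f : C(↥(FlowSet A), ℝ)),
      Tendsto (fun j => ∫ y, f y ∂(μn (nj j) θ)) atTop (nhds (∫ y, f y ∂(μ θ)))) :
    -- conclusion: μ is a Bayes correlated Wardrop equilibrium of Γ
    ∀ a b : A,
      ∑ θ, p θ * ∫ y : ↥(FlowSet A), (y : A → ℝ) a * c a (y : A → ℝ) θ ∂(μ θ) ≤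
      ∑ θ, p θ * ∫ y : ↥(FlowSet A), (y : A → ℝ) a * c b (y : A → ℝ) θ ∂(μ θ) := by
  intro a b
  have hlim : ∀ a', Tendsto (fun j => expectedCost p (β (nj j)) a (c a')) atTop
      (nhds (∑ θ, p θ * ∫ y : ↥(FlowSet A), (y : A → ℝ) a * c a' (y : A → ℝ) θ ∂(μ θ))) := by
    intro a'
    refine tendsto_finsetSum _ fun θ _ => Tendsto.const_mul (p θ) ?_
    have hF : Continuous fun y : ↥(FlowSet A) => (y : A → ℝ) a * c a' (y : A → ℝ) θ :=
      ((continuous_apply a).comp continuous_subtype_val).mul (hc a' θ).domRestrict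
    refine (hconv θ ⟨_, hF⟩).congr fun j => ?_
    rw [hout _ (hnj1 j), integral_sum_smul_dirac _ (hβ0 _ (hnj1 j) θ)]
    rfl
  refine le_of_forall_pos_le_add fun ε hε =>
    le_of_tendsto_of_tendsto (hlim a) ((hlim b).add_const ε) ?_
  filter_upwards [hnj.tendsto_atTop.eventually
    (eventually_dist_shiftFlow_lt (continuousOn_pi.2 (hc b)) a b hε)] with j hj
  have hn := hnj1 j
  refine (IsObedient.expectedCost_le hn (hBCE _ hn) a b).trans <| expectedCost_le_add hn
    (fun θ => (hp θ).le) hp1 (hβ0 _ hn) (hβ1 _ hn) hε.le fun θ v hv => ?_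
  have hclose := (dist_le_pi_dist _ _ θ).trans_lt
    (hj _ (flowOf_mem hn v) (shiftFlow_flowOf_mem hn hv b))
  rw [Real.dist_eq, abs_sub_lt_iff] at hclose
  linarith [hclose.1]

/-- Any weak* accumulation point of Bayes correlated equilibrium
outcomes of the `n`-player games `Γ_n` is a Bayes correlated Wardrop equilibrium of
the nonatomic game `Γ`. -/
theorem stmt13 {A Θ : Type*} [Fintype A] [Nonempty A] [DecidableEq A]
    [Fintype Θ] [Nonempty Θ]
    (p : Θ → ℝ) (hp : ∀ θ, 0 < p θ) (hp1 : ∑ θ, p θ = 1)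
    (c : A → (A → ℝ) → Θ → ℝ)
    (hc : ∀ a θ, ContinuousOn (fun y => c a y θ) (FlowSet A))
    -- for each n ≥ 1, a Bayes correlated equilibrium β n of the n-player game Γ_n
    (β : ∀ n : ℕ, Θ → (Fin n → A) → ℝ)
    (hβ0 : ∀ n, 0 < n → ∀ θ v, 0 ≤ β n θ v)
    (hβ1 : ∀ n, 0 < n → ∀ θ, ∑ v, β n θ v = 1)
    (hBCE : ∀ n, 0 < n → ∀ (i : Fin n) (a b : A),
      (∑ θ, ∑ v ∈ Finset.univ.filter (fun v : Fin n → A => v i = a),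
        p θ * β n θ v * c a (flowOf v) θ) ≤
      (∑ θ, ∑ v ∈ Finset.univ.filter (fun v : Fin n → A => v i = a),
        p θ * β n θ v * c b (flowOf (Function.update v i b)) θ))
    -- the induced outcomes
    (μn : ℕ → Θ → Measure ↥(FlowSet A))
    (hout : ∀ n (hn : 0 < n) (θ : Θ), μn n θ =
      ∑ v : Fin n → A, (ENNReal.ofReal (β n θ v)) •
        Measure.dirac (⟨flowOf v, flowOf_mem hn v⟩ : ↥(FlowSet A)))
    -- a weak* accumulation point μ along a strictly increasing subsequence
    (nj : ℕ → ℕ) (hnj : StrictMono nj) (hnj1 : ∀ j, 0 < nj j)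
    (μ : Θ → Measure ↥(FlowSet A)) (hprob : ∀ θ, IsProbabilityMeasure (μ θ))
    (hconv : ∀ (θ : Θ) (f : C(↥(FlowSet A), ℝ)),
      Tendsto (fun j => ∫ y, f y ∂(μn (nj j) θ)) atTop (nhds (∫ y, f y ∂(μ θ)))) :
    -- conclusion: μ is a Bayes correlated Wardrop equilibrium of Γ
    ∀ a b : A,
      ∑ θ, p θ * ∫ y : ↥(FlowSet A), (y : A → ℝ) a * c a (y : A → ℝ) θ ∂(μ θ) ≤
      ∑ θ, p θ * ∫ y : ↥(FlowSet A), (y : A → ℝ) a * c b (y : A → ℝ) θ ∂(μ θ) :=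
  stmt13_general p hp hp1 c hc β hβ0 hβ1 hBCE μn hout nj hnj hnj1 μ hconv
end
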